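/- Soft policy improvement: in a finite-state, finite-action MDP, if π' is the greedy stochastic policy with respect to the soft Q-function Q^π (i.e., π'(·|s) maximizes Σ_a ρ(a)(Q^π(s,a) − α log ρ(a)) over distributions ρ), then the soft value satisfies V^{π'}(s) ≥ V^π(s) for all states s. -/

import Mathlib

/-!
Greediness says that `π'` does at least as well as `π` against the fixed `Q^π`:
`V^π(s) ≤ Σ_a π'(a|s)(Q^π(s,a) − α log π'(a|s))`. Feeding this into the two soft Bellman
fixed-point equations bounds `Q^π − Q^{π'}` by `γ` times its own maximum, so `Q^π ≤ Q^{π'}`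
since `γ < 1`; monotonicity of the soft value in `Q` then gives `V^π ≤ V^{π'}`.
-/

/-- The soft Bellman backup operator for a fixed stochastic policy. -/
noncomputable def softBellman {S A : Type*} [Fintype S] [Fintype A]
    (r : S → A → ℝ) (P : S → A → S → ℝ) (pol : S → A → ℝ) (γ α : ℝ)
    (Q : S → A → ℝ) : S → A → ℝ :=
  fun s a => r s a + γ * ∑ s' : S, P s a s' *
    ∑ a' : A, pol s' a' * (Q s' a' - α * Real.log (pol s' a'))

/-- The soft value function `V^π(s) = Σ_a π(a|s)(Q(s,a) − α log π(a|s))`. -/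
noncomputable def softValue {S A : Type*} [Fintype A]
    (pol : S → A → ℝ) (α : ℝ) (Q : S → A → ℝ) (s : S) : ℝ :=
  ∑ a : A, pol s a * (Q s a - α * Real.log (pol s a))

open Finset

theorem Finite.forall_le_zero_of_le_mul_upperBound {ι : Type*} [Finite ι] {f : ι → ℝ}
    {γ : ℝ} (hγ1 : γ < 1) (h : ∀ c, (∀ j, f j ≤ c) → ∀ i, f i ≤ γ * c) :
    ∀ i, f i ≤ 0 := by
  intro i
  have : Nonempty ι := ⟨i⟩
  obtain ⟨j, hj⟩ := Finite.exists_max f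
  have hfj : f j ≤ γ * f j := h (f j) hj j
  have : f j ≤ 0 := by nlinarith
  exact (hj i).trans this

theorem Fintype.sum_mul_le_of_le {ι : Type*} [Fintype ι] {w f : ι → ℝ} {c : ℝ}
    (hw0 : ∀ i, 0 ≤ w i) (hw1 : ∑ i, w i = 1) (hf : ∀ i, f i ≤ c) :
    ∑ i, w i * f i ≤ c :=
  calc ∑ i, w i * f i ≤ ∑ i, w i * c :=
        sum_le_sum fun i _ => mul_le_mul_of_nonneg_left (hf i) (hw0 i)
    _ = c := by rw [← sum_mul, hw1, one_mul]

section Soft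

variable {S A : Type*} [Fintype A]

theorem softBellman_apply [Fintype S] (r : S → A → ℝ) (P : S → A → S → ℝ)
    (pol : S → A → ℝ) (γ α : ℝ) (Q : S → A → ℝ) (s : S) (a : A) :
    softBellman r P pol γ α Q s a = r s a + γ * ∑ s', P s a s' * softValue pol α Q s' :=
  rfl

theorem softValue_sub_softValue (pol : S → A → ℝ) (α : ℝ) (Q Q' : S → A → ℝ) (s : S) :
    softValue pol α Q s - softValue pol α Q' s = ∑ a, pol s a * (Q s a - Q' s a) := by
  simp only [softValue, ← sum_sub_distrib]
  exact sum_congr rfl fun a _ => by ring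

theorem softValue_mono {pol : S → A → ℝ} (hpol0 : ∀ s a, 0 ≤ pol s a) (α : ℝ)
    {Q Q' : S → A → ℝ} (hQ : ∀ s a, Q s a ≤ Q' s a) (s : S) :
    softValue pol α Q s ≤ softValue pol α Q' s :=
  sum_le_sum fun a _ => mul_le_mul_of_nonneg_left (by linarith [hQ s a]) (hpol0 s a)

theorem softQ_le_of_softValue_le [Fintype S] {r : S → A → ℝ} {P : S → A → S → ℝ} {γ α : ℝ}
    (hγ0 : 0 ≤ γ) (hγ1 : γ < 1)
    (hP0 : ∀ s a s', 0 ≤ P s a s') (hP1 : ∀ s a, ∑ s', P s a s' = 1)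
    {pol pol' : S → A → ℝ} (hpol'0 : ∀ s a, 0 ≤ pol' s a) (hpol'1 : ∀ s, ∑ a, pol' s a = 1)
    {Q Q' : S → A → ℝ}
    (hfix : softBellman r P pol γ α Q = Q) (hfix' : softBellman r P pol' γ α Q' = Q')
    (himp : ∀ s, softValue pol α Q s ≤ softValue pol' α Q s) :
    ∀ s a, Q s a ≤ Q' s a := by
  suffices h : ∀ p : S × A, Q p.1 p.2 - Q' p.1 p.2 ≤ 0 from
    fun s a => sub_nonpos.mp (h (s, a))
  refine Finite.forall_le_zero_of_le_mul_upperBound hγ1 fun c hc ⟨s, a⟩ => ?_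
  have hvalue : ∀ s', softValue pol α Q s' - softValue pol' α Q' s' ≤ c := fun s' =>
    calc softValue pol α Q s' - softValue pol' α Q' s'
        ≤ softValue pol' α Q s' - softValue pol' α Q' s' := by linarith [himp s']
      _ ≤ c := by
        rw [softValue_sub_softValue]
        exact Fintype.sum_mul_le_of_le (hpol'0 s') (hpol'1 s') fun a' => hc (s', a')
  have hdiff : Q s a - Q' s a =
      γ * ∑ s', P s a s' * (softValue pol α Q s' - softValue pol' α Q' s') := by
    rw [← congrFun₂ hfix s a, ← congrFun₂ hfix' s a, softBellman_apply, softBellman_apply]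
    simp only [mul_sub, sum_sub_distrib]
    ring
  rw [hdiff]
  exact mul_le_mul_of_nonneg_left (Fintype.sum_mul_le_of_le (hP0 s a) (hP1 s a) hvalue) hγ0

end Soft

theorem soft_policy_improvement_general {S A : Type*} [Fintype S] [Fintype A]
    (r : S → A → ℝ) (P : S → A → S → ℝ) (γ α : ℝ)
    (hγ0 : 0 ≤ γ) (hγ1 : γ < 1)
    (hP0 : ∀ s a s', 0 ≤ P s a s') (hP1 : ∀ s a, ∑ s' : S, P s a s' = 1)
    (pol pol' : S → A → ℝ)
    (hpol_pos : ∀ s a, 0 < pol s a) (hpol1 : ∀ s, ∑ a : A, pol s a = 1)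
    (hpol'_pos : ∀ s a, 0 < pol' s a) (hpol'1 : ∀ s, ∑ a : A, pol' s a = 1)
    (Qpi Qpi' : S → A → ℝ)
    (hfix : softBellman r P pol γ α Qpi = Qpi)
    (hfix' : softBellman r P pol' γ α Qpi' = Qpi')
    (hgreedy : ∀ s, ∀ ρ : A → ℝ, (∀ a, 0 ≤ ρ a) → ∑ a : A, ρ a = 1 →
      ∑ a : A, ρ a * (Qpi s a - α * Real.log (ρ a)) ≤
        ∑ a : A, pol' s a * (Qpi s a - α * Real.log (pol' s a))) :
    ∀ s, softValue pol α Qpi s ≤ softValue pol' α Qpi' s := by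
  have hpol'0 : ∀ s a, 0 ≤ pol' s a := fun s a => (hpol'_pos s a).le
  have himp : ∀ s, softValue pol α Qpi s ≤ softValue pol' α Qpi s := fun s =>
    hgreedy s (pol s) (fun a => (hpol_pos s a).le) (hpol1 s)
  have hQ : ∀ s a, Qpi s a ≤ Qpi' s a :=
    softQ_le_of_softValue_le hγ0 hγ1 hP0 hP1 hpol'0 hpol'1 hfix hfix' himp
  exact fun s => (himp s).trans (softValue_mono hpol'0 α hQ s)

/-- Soft policy improvement: if `π'` is greedy with respect to
the soft Q-function `Q^π` (it maximizes the entropy-regularized one-step value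
over all action distributions), then `V^{π'}(s) ≥ V^π(s)` for all `s`. -/
theorem soft_policy_improvement {S A : Type*} [Fintype S] [Fintype A]
    [Nonempty S] [Nonempty A]
    (r : S → A → ℝ) (P : S → A → S → ℝ) (γ α : ℝ)
    (hγ0 : 0 ≤ γ) (hγ1 : γ < 1) (hα : 0 < α)
    (hP0 : ∀ s a s', 0 ≤ P s a s') (hP1 : ∀ s a, ∑ s' : S, P s a s' = 1)
    (pol pol' : S → A → ℝ)
    (hpol_pos : ∀ s a, 0 < pol s a) (hpol1 : ∀ s, ∑ a : A, pol s a = 1)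
    (hpol'_pos : ∀ s a, 0 < pol' s a) (hpol'1 : ∀ s, ∑ a : A, pol' s a = 1)
    (Qpi Qpi' : S → A → ℝ)
    (hfix : softBellman r P pol γ α Qpi = Qpi)
    (hfix' : softBellman r P pol' γ α Qpi' = Qpi')
    (hgreedy : ∀ s, ∀ ρ : A → ℝ, (∀ a, 0 ≤ ρ a) → ∑ a : A, ρ a = 1 →
      ∑ a : A, ρ a * (Qpi s a - α * Real.log (ρ a)) ≤
        ∑ a : A, pol' s a * (Qpi s a - α * Real.log (pol' s a))) :
    ∀ s, softValue pol α Qpi s ≤ softValue pol' α Qpi' s :=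
  soft_policy_improvement_general r P γ α hγ0 hγ1 hP0 hP1 pol pol' hpol_pos hpol1 hpol'_pos hpol'1
    Qpi Qpi' hfix hfix' hgreedy
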